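/- arXiv:1409.8428 — 2 statements merged into one kernel-verified Lean document; each statement's English description precedes it below -/
import Mathlib

section
/- Let G = (V,D) be a directed graph on K vertices with independence number α, let R ⊆ V be a dominating set of size r, and let p_1,...,p_K be a probability distribution on V with p_i ≥ β > 0 for all i ∈ R. Then Σ_{i=1}^K p_i/(p_i + Σ_{j:(j,i)∈D} p_j) ≤ 2α · ln(1 + (⌈K²/(rβ)⌉ + K)/α) + 2r. -/
open scoped BigOperators

/-- Independence number of (the underlying undirected graph of) a directed graph. -/
noncomputable def indepNum {V : Type*} [Fintype V] (D : V → V → Prop) : ℕ :=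
  sSup {n | ∃ S : Finset V, S.card = n ∧
    ∀ i ∈ S, ∀ j ∈ S, i ≠ j → ¬ D i j ∧ ¬ D j i}

/-!
Perturb `p` to the weights `w = p + ε` with `ε = rβ/K²`. A vertex outside `R` has an in-neighbour
in `R`, hence in-weight at least `β`, so its term moves by at most `Kε/β = r/K`; the terms on `R`
are at most `1`. Together this costs `2r`.

For weights `w ≥ ε` of total `W` on a digraph with independence number `α`, the weighted Caro–Wei
inequality `∑ w_v / w(N[v]) ≤ α`, Cauchy–Schwarz and the double counting
`∑ w_v w(N⁺(v)) = ∑ w_v w(N⁻(v))` give a vertex with `w_v + w(N⁻(v)) ≥ (W + εα)/(2α)`. Its term is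
at most `2α (ln(W + εα) - ln(W - w_v + εα))`, so deleting such vertices one at a time telescopes to
`∑ w_v / (w_v + w(N⁻(v))) ≤ 2α ln((W + εα)/(εα))`, with `W = 1 + Kε` here.
-/

open Finset

variable {V : Type*}

lemma div_le_log_sub_log {x a : ℝ} (hx : 0 ≤ x) (hxa : x < a) :
    x / a ≤ Real.log a - Real.log (a - x) := by
  have ha : 0 < a := hx.trans_lt hxa
  have hax : 0 < a - x := sub_pos.2 hxa
  have h := Real.one_sub_inv_le_log_of_pos (div_pos ha hax)
  rw [Real.log_div ha.ne' hax.ne', inv_div] at h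
  calc x / a = 1 - (a - x) / a := by field_simp; ring
    _ ≤ _ := h

lemma div_add_le_div_add_add {a b a' b' c β : ℝ} (ha : 0 ≤ a) (hβ : 0 < β) (hb : β ≤ b)
    (hc : 0 ≤ c) (haa' : a ≤ a') (hd : 0 < a' + b') (hle : a' + b' ≤ a + b + c) :
    a / (a + b) ≤ a' / (a' + b') + c / β := by
  have hab : 0 < a + b := by linarith
  calc a / (a + b) = a / (a + b + c) + a * c / ((a + b) * (a + b + c)) := by
        field_simp
    _ ≤ a' / (a' + b') + c / β := by
      refine add_le_add (div_le_div₀ (ha.trans haa') haa' hd hle) ?_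
      rw [div_le_div_iff₀ (mul_pos hab (by linarith)) hβ]
      have : a * β ≤ (a + b) * (a + b + c) := by nlinarith
      nlinarith

namespace SimpleGraph

lemma one_le_of_forall_isIndepSet_card_le {G : SimpleGraph V} {S : Finset V} (hS : S.Nonempty)
    {α : ℝ} (hα : ∀ T ⊆ S, G.IsIndepSet (T : Set V) → (#T : ℝ) ≤ α) : 1 ≤ α := by
  obtain ⟨v, hv⟩ := hS
  simpa using hα {v} (singleton_subset_iff.2 hv) (by simp)

variable [DecidableEq V] (G : SimpleGraph V) [DecidableRel G.Adj]

noncomputable def closedNbhdWeight (S : Finset V) (w : V → ℝ) (v : V) : ℝ :=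
  ∑ u ∈ S with u = v ∨ G.Adj u v, w u

variable {G}

lemma closedNbhdWeight_pos {S : Finset V} {w : V → ℝ} (hw : ∀ u ∈ S, 0 < w u) {v : V}
    (hv : v ∈ S) : 0 < G.closedNbhdWeight S w v :=
  sum_pos (fun u hu => hw u (mem_filter.1 hu).1) ⟨v, mem_filter.2 ⟨hv, Or.inl rfl⟩⟩

lemma closedNbhdWeight_mono {S T : Finset V} (hST : S ⊆ T) {w : V → ℝ}
    (hw : ∀ u ∈ T, 0 ≤ w u) (v : V) : G.closedNbhdWeight S w v ≤ G.closedNbhdWeight T w v :=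
  sum_le_sum_of_subset_of_nonneg (filter_subset_filter _ hST)
    fun u hu _ => hw u (mem_filter.1 hu).1

theorem sum_div_closedNbhdWeight_le (S : Finset V) {w : V → ℝ} (hw : ∀ v ∈ S, 0 < w v) {α : ℝ}
    (hα : ∀ T ⊆ S, G.IsIndepSet (T : Set V) → (#T : ℝ) ≤ α) :
    ∑ v ∈ S, w v / G.closedNbhdWeight S w v ≤ α := by
  induction S using Finset.strongInduction generalizing α with
  | H S ih =>
  rcases S.eq_empty_or_nonempty with rfl | hne
  · simpa using hα ∅ (empty_subset _) (by simp)
  obtain ⟨v, hvS, hmin⟩ := S.exists_min_image (G.closedNbhdWeight S w) hne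
  have hvpos : 0 < G.closedNbhdWeight S w v := closedNbhdWeight_pos hw hvS
  set S' := {u ∈ S | ¬(u = v ∨ G.Adj u v)} with hS'
  have hS'S : S' ⊆ S := filter_subset _ _
  have hvS' : v ∉ S' := by simp [hS']
  have hnbhd : ∑ u ∈ S with u = v ∨ G.Adj u v, w u / G.closedNbhdWeight S w u ≤ 1 := calc
    _ ≤ ∑ u ∈ S with u = v ∨ G.Adj u v, w u / G.closedNbhdWeight S w v :=
      sum_le_sum fun u hu => div_le_div_of_nonneg_left (hw u (mem_filter.1 hu).1).le hvpos
        (hmin u (mem_filter.1 hu).1)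
    _ = 1 := by rw [← sum_div]; exact div_self hvpos.ne'
  -- every independent subset of `S'` extends by `v`, so `S'` has independence bound `α - 1`
  have hrest : ∑ u ∈ S', w u / G.closedNbhdWeight S w u ≤ α - 1 := calc
    _ ≤ ∑ u ∈ S', w u / G.closedNbhdWeight S' w u :=
      sum_le_sum fun u hu => div_le_div_of_nonneg_left (hw u (hS'S hu)).le
        (closedNbhdWeight_pos (fun x hx => hw x (hS'S hx)) hu)
        (closedNbhdWeight_mono hS'S (fun x hx => (hw x hx).le) u)
    _ ≤ α - 1 := by
      refine ih S' (ssubset_of_subset_of_ne hS'S (fun h => hvS' (h ▸ hvS)))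
        (fun u hu => hw u (hS'S hu)) fun T hT hTind => ?_
      have hvT : v ∉ T := fun h => hvS' (hT h)
      have hins := hα (insert v T) (insert_subset hvS (hT.trans hS'S)) <| by
        rw [coe_insert]
        refine hTind.insert_of_notMem (by simpa using hvT) fun b hb => ?_
        have hb' := (mem_filter.1 (hT hb)).2
        exact ⟨fun h => hb' (Or.inr h.symm), fun h => hb' (Or.inr h)⟩
      rw [card_insert_of_notMem hvT, Nat.cast_succ] at hins
      linarith
  rw [← sum_filter_add_sum_filter_not S (fun u => u = v ∨ G.Adj u v)]
  linarith

end SimpleGraph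

section InWeight

variable (E : V → V → Prop) [DecidableRel E]

noncomputable def inWeight (S : Finset V) (w : V → ℝ) (v : V) : ℝ := ∑ u ∈ S with E u v, w u

variable {E}

lemma inWeight_nonneg {S : Finset V} {w : V → ℝ} (hw : ∀ u ∈ S, 0 ≤ w u) (v : V) :
    0 ≤ inWeight E S w v :=
  sum_nonneg fun u hu => hw u (mem_filter.1 hu).1

lemma inWeight_mono {S T : Finset V} (hST : S ⊆ T) {w : V → ℝ} (hw : ∀ u ∈ T, 0 ≤ w u)
    (v : V) : inWeight E S w v ≤ inWeight E T w v :=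
  sum_le_sum_of_subset_of_nonneg (filter_subset_filter _ hST)
    fun u hu _ => hw u (mem_filter.1 hu).1

lemma sum_mul_inWeight_swap (S : Finset V) (w : V → ℝ) :
    ∑ v ∈ S, w v * inWeight (fun a b => E b a) S w v = ∑ v ∈ S, w v * inWeight E S w v := by
  simp only [inWeight, mul_sum, sum_filter]
  rw [sum_comm]
  refine sum_congr rfl fun v _ => sum_congr rfl fun u _ => ?_
  split_ifs <;> ring

lemma closedNbhdWeight_fromRel_le [DecidableEq V] {S : Finset V} {w : V → ℝ}
    (hw : ∀ u ∈ S, 0 ≤ w u) {v : V} (hv : v ∈ S) :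
    (SimpleGraph.fromRel E).closedNbhdWeight S w v
      ≤ w v + inWeight E S w v + inWeight (fun a b => E b a) S w v := by
  have h := sum_ite_eq' S v w
  simp only [SimpleGraph.closedNbhdWeight, inWeight, sum_filter, if_pos hv] at h ⊢
  rw [← h, ← sum_add_distrib, ← sum_add_distrib]
  refine sum_le_sum fun u hu => ?_
  have := hw u hu
  simp only [SimpleGraph.fromRel_adj]
  split_ifs <;> simp_all

end InWeight

section WeightedBound

variable {E : V → V → Prop} [DecidableRel E] {S : Finset V} {w : V → ℝ} {ε α : ℝ}

lemma sq_sum_div_add_le_two_mul_sum (hε : 0 < ε) (hw : ∀ v ∈ S, ε ≤ w v)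
    (hα : ∀ T ⊆ S, (SimpleGraph.fromRel E).IsIndepSet (T : Set V) → (#T : ℝ) ≤ α)
    (hαpos : 0 < α) :
    (∑ v ∈ S, w v) ^ 2 / α + ε * ∑ v ∈ S, w v
      ≤ 2 * ∑ v ∈ S, w v * (w v + inWeight E S w v) := by
  classical
  have hwpos : ∀ v ∈ S, 0 < w v := fun v hv => hε.trans_le (hw v hv)
  set G := SimpleGraph.fromRel E
  have hN : ∀ v ∈ S, 0 < w v * G.closedNbhdWeight S w v := fun v hv =>
    mul_pos (hwpos v hv) (SimpleGraph.closedNbhdWeight_pos hwpos hv)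
  have hCS : (∑ v ∈ S, w v) ^ 2 / α ≤ ∑ v ∈ S, w v * G.closedNbhdWeight S w v := by
    rcases S.eq_empty_or_nonempty with rfl | hne
    · simp
    have hsum := sum_pos hN hne
    have h := (sq_sum_div_le_sum_sq_div S w hN).trans_eq
      (sum_congr rfl fun v hv => by rw [sq, mul_div_mul_left _ _ (hwpos v hv).ne'])
    rw [div_le_iff₀ hsum] at h
    rw [div_le_iff₀ hαpos, mul_comm]
    exact h.trans (mul_le_mul_of_nonneg_right (G.sum_div_closedNbhdWeight_le S hwpos hα) hsum.le)
  have hN_le : ∑ v ∈ S, w v * G.closedNbhdWeight S w v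
      ≤ ∑ v ∈ S, w v * (w v + inWeight E S w v + inWeight (fun a b => E b a) S w v) :=
    sum_le_sum fun v hv => mul_le_mul_of_nonneg_left
      (closedNbhdWeight_fromRel_le (fun u hu => (hwpos u hu).le) hv) (hwpos v hv).le
  have hε_le : ε * ∑ v ∈ S, w v ≤ ∑ v ∈ S, w v * w v := by
    rw [mul_sum]
    exact sum_le_sum fun v hv => mul_le_mul_of_nonneg_right (hw v hv) (hwpos v hv).le
  have hswap := sum_mul_inWeight_swap (E := E) S w
  simp only [mul_add, sum_add_distrib] at hN_le ⊢
  linarith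

lemma exists_add_inWeight_ge (hS : S.Nonempty) (hε : 0 < ε)
    (hw : ∀ v ∈ S, ε ≤ w v)
    (hα : ∀ T ⊆ S, (SimpleGraph.fromRel E).IsIndepSet (T : Set V) → (#T : ℝ) ≤ α) :
    ∃ v ∈ S, (∑ u ∈ S, w u + ε * α) / (2 * α) ≤ w v + inWeight E S w v := by
  have hαpos : 0 < α := one_pos.trans_le (SimpleGraph.one_le_of_forall_isIndepSet_card_le hS hα)
  have hwpos : ∀ v ∈ S, 0 < w v := fun v hv => hε.trans_le (hw v hv)
  have h := sq_sum_div_add_le_two_mul_sum hε hw hα hαpos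
  obtain ⟨v, hv, hle⟩ := exists_le_of_sum_le hS
    (f := fun v => w v * ((∑ u ∈ S, w u + ε * α) / (2 * α)))
    (g := fun v => w v * (w v + inWeight E S w v)) <| by
    rw [← sum_mul]
    rw [div_add' _ _ _ hαpos.ne', div_le_iff₀ hαpos] at h
    field_simp
    linarith
  exact ⟨v, hv, le_of_mul_le_mul_left hle (hwpos v hv)⟩

theorem sum_div_add_inWeight_le_log (S : Finset V) (hε : 0 < ε) (hw : ∀ v ∈ S, ε ≤ w v)
    (hα : ∀ T ⊆ S, (SimpleGraph.fromRel E).IsIndepSet (T : Set V) → (#T : ℝ) ≤ α) :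
    ∑ v ∈ S, w v / (w v + inWeight E S w v)
      ≤ 2 * α * (Real.log (∑ v ∈ S, w v + ε * α) - Real.log (ε * α)) := by
  classical
  induction S using Finset.strongInduction with
  | H S ih =>
  rcases S.eq_empty_or_nonempty with rfl | hne
  · simp
  have hαpos : 0 < α := one_pos.trans_le (SimpleGraph.one_le_of_forall_isIndepSet_card_le hne hα)
  have hwpos : ∀ v ∈ S, 0 < w v := fun v hv => hε.trans_le (hw v hv)
  obtain ⟨v, hv, hgood⟩ := exists_add_inWeight_ge hne hε hw hα
  set W := ∑ u ∈ S, w u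
  have hW : ∑ u ∈ S.erase v, w u = W - w v := by rw [eq_sub_iff_add_eq, sum_erase_add S w hv]
  have hvW : w v < W + ε * α := by
    linarith [single_le_sum (fun u hu => (hwpos u hu).le) hv, mul_pos hε hαpos]
  have hterm : w v / (w v + inWeight E S w v)
      ≤ 2 * α * (Real.log (W + ε * α) - Real.log (W - w v + ε * α)) := calc
    _ ≤ w v / ((W + ε * α) / (2 * α)) :=
      div_le_div_of_nonneg_left (hwpos v hv).le
        (div_pos ((hwpos v hv).trans hvW) (by positivity)) hgood
    _ = 2 * α * (w v / (W + ε * α)) := by field_simp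
    _ ≤ _ := by
      gcongr
      have h := div_le_log_sub_log (hwpos v hv).le hvW
      rwa [show W + ε * α - w v = W - w v + ε * α by ring] at h
  have hrest : ∑ u ∈ S.erase v, w u / (w u + inWeight E S w u)
      ≤ 2 * α * (Real.log (W - w v + ε * α) - Real.log (ε * α)) := calc
    _ ≤ ∑ u ∈ S.erase v, w u / (w u + inWeight E (S.erase v) w u) :=
      sum_le_sum fun u hu => div_le_div_of_nonneg_left (hwpos u (mem_of_mem_erase hu)).le
        (add_pos_of_pos_of_nonneg (hwpos u (mem_of_mem_erase hu))
          (inWeight_nonneg (fun x hx => (hwpos x (mem_of_mem_erase hx)).le) u))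
        (add_le_add_right (inWeight_mono (erase_subset v S) (fun x hx => (hwpos x hx).le) u) _)
    _ ≤ _ := by
      rw [← hW]
      exact ih _ (erase_ssubset hv) (fun u hu => hw u (mem_of_mem_erase hu))
        fun T hT => hα T (hT.trans (erase_subset v S))
  rw [← add_sum_erase S _ hv]
  linarith

end WeightedBound

section Dominating

variable {E : V → V → Prop} [DecidableRel E]

lemma card_filter_add_one_le [Fintype V] (hirr : ∀ v, ¬E v v) (v : V) :
    #{u | E u v} + 1 ≤ Fintype.card V :=
  card_lt_univ_of_notMem (by simpa using hirr v)

lemma inWeight_add_const [Fintype V] (p : V → ℝ) (ε : ℝ) (v : V) :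
    inWeight E univ (fun u => p u + ε) v = inWeight E univ p v + #{u | E u v} * ε := by
  simp only [inWeight, sum_add_distrib, sum_const, nsmul_eq_mul]

theorem sum_div_add_inWeight_le_of_dominating [Fintype V] (hirr : ∀ v, ¬E v v)
    (R : Finset V) (hdom : ∀ i ∉ R, ∃ j ∈ R, E j i) {β : ℝ} (hβ : 0 < β) {p : V → ℝ}
    (hp : ∀ i, 0 ≤ p i) (hpR : ∀ i ∈ R, β ≤ p i) {ε : ℝ} (hε : 0 < ε) :
    ∑ i, p i / (p i + inWeight E univ p i)
      ≤ ∑ i, (p i + ε) / (p i + ε + inWeight E univ (fun j => p j + ε) i)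
        + #R + Fintype.card V * (Fintype.card V * ε / β) := by
  classical
  set K := (Fintype.card V : ℝ)
  set f := fun i => p i / (p i + inWeight E univ p i)
  set g := fun i => (p i + ε) / (p i + ε + inWeight E univ (fun j => p j + ε) i)
  have hin_nonneg : ∀ i, 0 ≤ inWeight E univ p i := inWeight_nonneg fun u _ => hp u
  have hinε_nonneg : ∀ i, 0 ≤ inWeight E univ (fun j => p j + ε) i :=
    inWeight_nonneg fun u _ => by linarith [hp u]
  have hg : ∀ i, 0 ≤ g i := fun i =>
    div_nonneg (by linarith [hp i]) (by linarith [hp i, hinε_nonneg i])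
  have hR : ∀ i ∈ R, f i ≤ 1 := fun i _ =>
    div_le_one_of_le₀ (by linarith [hin_nonneg i]) (by linarith [hp i, hin_nonneg i])
  have hRc : ∀ i ∉ R, f i ≤ g i + K * ε / β := by
    intro i hi
    obtain ⟨j, hjR, hji⟩ := hdom i hi
    have hdeg : (#{u | E u i} : ℝ) + 1 ≤ K := by
      simp only [K]; exact_mod_cast card_filter_add_one_le hirr i
    refine div_add_le_div_add_add (hp i) hβ ?_ (by positivity) (by linarith)
      (by linarith [hp i, hinε_nonneg i]) ?_
    · exact (hpR j hjR).trans (single_le_sum (fun u _ => hp u) (by simpa using hji))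
    · rw [inWeight_add_const]
      nlinarith
  calc ∑ i, f i = ∑ i ∈ R, f i + ∑ i ∈ Rᶜ, f i := (sum_add_sum_compl R f).symm
    _ ≤ #R + (∑ i ∈ Rᶜ, g i + #Rᶜ * (K * ε / β)) := by
      gcongr
      · simpa using sum_le_sum hR
      · rw [← nsmul_eq_mul, ← sum_const, ← sum_add_distrib]
        exact sum_le_sum fun i hi => hRc i (mem_compl.1 hi)
    _ ≤ #R + (∑ i, g i + K * (K * ε / β)) := by
      have hsub : ∑ i ∈ Rᶜ, g i ≤ ∑ i, g i :=
        sum_le_sum_of_subset_of_nonneg (subset_univ _) fun i _ _ => hg i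
      have hcard : (#Rᶜ : ℝ) ≤ K := by simp only [K]; exact_mod_cast card_le_univ Rᶜ
      have hc : 0 ≤ K * ε / β := by simp only [K]; positivity
      linarith [mul_le_mul_of_nonneg_right hcard hc]
    _ = _ := by ring

end Dominating

lemma indepNum_eq_indepNum_fromRel [Fintype V] (D : V → V → Prop) :
    indepNum D = (SimpleGraph.fromRel D).indepNum := by
  unfold indepNum SimpleGraph.indepNum
  congr 1
  ext n
  simp only [Set.mem_ofPred_eq, SimpleGraph.isNIndepSet_iff, SimpleGraph.isIndepSet_iff,
    Set.Pairwise, mem_coe, SimpleGraph.fromRel_adj]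
  refine exists_congr fun S => ?_
  rw [and_comm]
  refine and_congr_left fun _ => forall₄_congr fun i _ j _ => imp_congr_right fun hij => ?_
  simp [hij]

lemma log_sub_log_le_log_one_add_ceil {K ε α : ℝ} (hK : 0 ≤ K) (hε : 0 < ε) (hα : 0 < α) :
    Real.log (1 + K * ε + ε * α) - Real.log (ε * α) ≤ Real.log (1 + (⌈1 / ε⌉₊ + K) / α) := by
  rw [← Real.log_div (by positivity) (by positivity)]
  refine Real.log_le_log (by positivity) ?_
  calc (1 + K * ε + ε * α) / (ε * α) = 1 + (1 / ε + K) / α := by field_simp; ring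
    _ ≤ _ := by gcongr; exact Nat.le_ceil _

/-- If `R` is a dominating set of size `r` for a directed graph `G` with
independence number `α`, and `p` is a probability distribution with `p_i ≥ β > 0`
on `R`, then `∑_i p_i/(p_i + ∑_{j:(j,i)∈D} p_j) ≤ 2α ln(1 + (⌈K²/(rβ)⌉ + K)/α) + 2r`. -/
theorem stmt6 (K : ℕ) (hK : 1 ≤ K) (D : Fin K → Fin K → Prop) [DecidableRel D]
    (hirr : ∀ i, ¬ D i i)
    (R : Finset (Fin K)) (hdom : ∀ i, i ∉ R → ∃ j ∈ R, D j i)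
    (β : ℝ) (hβ : 0 < β)
    (p : Fin K → ℝ) (hnn : ∀ i, 0 ≤ p i) (hsum : ∑ i, p i = 1)
    (hplb : ∀ i ∈ R, β ≤ p i) :
    ∑ i : Fin K, p i / (p i + ∑ j ∈ Finset.univ.filter (fun j => D j i), p j)
      ≤ 2 * (indepNum D : ℝ) *
          Real.log (1 + ((Nat.ceil ((K : ℝ) ^ 2 / ((R.card : ℝ) * β)) : ℝ) + (K : ℝ))
            / (indepNum D : ℝ))
        + 2 * (R.card : ℝ) := by
  have hind : ∀ T ⊆ (univ : Finset (Fin K)),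
      (SimpleGraph.fromRel D).IsIndepSet (T : Set (Fin K)) → (#T : ℝ) ≤ indepNum D := by
    intro T _ hT
    rw [indepNum_eq_indepNum_fromRel]
    exact_mod_cast hT.card_le_indepNum
  have hα : (0 : ℝ) < indepNum D := one_pos.trans_le
    (SimpleGraph.one_le_of_forall_isIndepSet_card_le (univ_nonempty_iff.2 ⟨⟨0, hK⟩⟩) hind)
  have hR : (0 : ℝ) < #R := by
    by_cases h : (⟨0, hK⟩ : Fin K) ∈ R
    · exact_mod_cast card_pos.2 ⟨_, h⟩
    · obtain ⟨j, hj, -⟩ := hdom _ h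
      exact_mod_cast card_pos.2 ⟨j, hj⟩
  have hK0 : (0 : ℝ) < K := by exact_mod_cast hK
  set ε : ℝ := #R * β / K ^ 2 with hεdef
  have hε : 0 < ε := by positivity
  have hweights :=
    sum_div_add_inWeight_le_log univ hε (fun i _ => le_add_of_nonneg_left (hnn i)) hind
  have hperturb := sum_div_add_inWeight_le_of_dominating hirr R hdom hβ hnn hplb hε
  have hlog := log_sub_log_le_log_one_add_ceil hK0.le hε hα
  have htotal : ∑ i, (p i + ε) = 1 + K * ε := by simp [sum_add_distrib, hsum]
  have herror : (K : ℝ) * (K * ε / β) = #R := by simp only [hεdef]; field_simp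
  rw [one_div_div] at hlog
  rw [htotal] at hweights
  rw [Fintype.card_fin, herror] at hperturb
  change ∑ i, p i / (p i + inWeight D univ p i) ≤ _
  linarith [mul_le_mul_of_nonneg_left hlog (by positivity : (0 : ℝ) ≤ 2 * indepNum D)]
end

section
/- In any directed graph, the vertex set of a maximal (with respect to inclusion) induced acyclic subgraph is a dominating set; consequently the domination number γ(G) is at most mas(G). -/
open scoped BigOperators

/-- A sequence of at least one arc inside `S` never returns to its starting
vertex: the subgraph induced by `S` has no directed cycles. -/
def AcyclicOn {V : Type*} (D : V → V → Prop) (S : Finset V) : Prop :=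
  ∀ (n : ℕ) (f : Fin (n + 2) → V), (∀ k, f k ∈ S) →
    (∀ k : Fin (n + 1), D (f k.castSucc) (f k.succ)) → f 0 ≠ f (Fin.last (n + 1))

/-- `mas D` : the maximum number of vertices of an induced acyclic subgraph. -/
noncomputable def mas {V : Type*} [Fintype V] (D : V → V → Prop) : ℕ :=
  sSup {n | ∃ S : Finset V, S.card = n ∧ AcyclicOn D S}

/-- Domination number: minimum size of a set `R` such that every vertex outside
`R` has an in-neighbor in `R`. -/
noncomputable def domNum {V : Type*} [Fintype V] (D : V → V → Prop) : ℕ :=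
  sInf {n | ∃ R : Finset V, R.card = n ∧ ∀ i, i ∉ R → ∃ j ∈ R, D j i}

lemma Fin.exists_succ_eq_of_closed {V : Type*} {n : ℕ} {f : Fin (n + 2) → V}
    (hclosed : f 0 = f (Fin.last (n + 1))) (m : Fin (n + 2)) :
    ∃ k : Fin (n + 1), f k.succ = f m := by
  by_cases hm : m = 0
  · exact ⟨Fin.last n, by rw [hm, hclosed, Fin.succ_last]⟩
  · obtain ⟨k, rfl⟩ := Fin.exists_succ_eq.mpr hm
    exact ⟨k, rfl⟩

section Digraph

variable {V : Type*} {D : V → V → Prop}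

/-- The new cycle must pass through `j`; the predecessor of `j` on it is not `j` itself,
so it lies in `S`. -/
theorem AcyclicOn.exists_mem_adj_of_not_acyclicOn_insert [DecidableEq V] {S : Finset V} {j : V}
    (hS : AcyclicOn D S) (hj : ¬ AcyclicOn D (insert j S)) (hloop : ¬ D j j) :
    ∃ i ∈ S, D i j := by
  simp only [AcyclicOn, not_forall, not_not] at hj
  obtain ⟨n, f, hmem, hadj, hclosed⟩ := hj
  have hvisit : ∃ m, f m = j := by
    by_contra! hnot
    exact hS n f (fun k => (Finset.mem_insert.mp (hmem k)).resolve_left (hnot k)) hadj hclosed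
  obtain ⟨m, rfl⟩ := hvisit
  obtain ⟨k, hk⟩ := Fin.exists_succ_eq_of_closed hclosed m
  have hpred := hadj k
  rw [hk] at hpred
  refine ⟨f k.castSucc, (Finset.mem_insert.mp (hmem _)).resolve_left ?_, hpred⟩
  rintro heq
  exact hloop (heq ▸ hpred)

variable [Fintype V]

theorem domNum_le_card {R : Finset V} (hR : ∀ i ∉ R, ∃ j ∈ R, D j i) :
    domNum D ≤ R.card :=
  Nat.sInf_le ⟨R, rfl, hR⟩

theorem AcyclicOn.card_le_mas {S : Finset V} (hS : AcyclicOn D S) : S.card ≤ mas D :=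
  le_csSup ⟨Fintype.card V, by rintro _ ⟨T, rfl, -⟩; exact T.card_le_univ⟩ ⟨S, rfl, hS⟩

end Digraph

/-- The vertex set of a maximal induced acyclic subgraph is a dominating set;
consequently `γ(G) ≤ mas(G)`. -/
theorem stmt8 (K : ℕ) (D : Fin K → Fin K → Prop) (hirr : ∀ i, ¬ D i i)
    (M : Finset (Fin K)) (hacyc : AcyclicOn D M)
    (hmax : ∀ j ∉ M, ¬ AcyclicOn D (insert j M)) :
    (∀ j ∉ M, ∃ i ∈ M, D i j) ∧ domNum D ≤ mas D := by
  have hdom : ∀ j ∉ M, ∃ i ∈ M, D i j := fun j hj =>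
    hacyc.exists_mem_adj_of_not_acyclicOn_insert (hmax j hj) (hirr j)
  exact ⟨hdom, (domNum_le_card hdom).trans hacyc.card_le_mas⟩
end
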